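/- arXiv:2510.11659 — 3 statements merged into one kernel-verified Lean document; each statement's English description precedes it below -/
import Mathlib

section
/- Parallel growths of strictly positive quantity vectors implies equality of compositional differences of the associated shares: if log q_{1,1} - log q_{1,0} = log q_{0,1} - log q_{0,0} componentwise, then π_{1,1} ⊖ π_{1,0} = π_{0,1} ⊖ π_{0,0}, where π_{g,t} is the normalization of q_{g,t} and ⊖ is the normalized componentwise ratio. -/
/-- The share vector of a positive quantity vector. -/
noncomputable def share {p : ℕ} (q : Fin p → ℝ) : Fin p → ℝ :=
  fun k => q k / ∑ j, q j

/-- Compositional difference: normalized componentwise ratio. -/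
noncomputable def codiff {p : ℕ} (π₁ π₂ : Fin p → ℝ) : Fin p → ℝ :=
  fun k => (π₁ k / π₂ k) / ∑ j, π₁ j / π₂ j

/-! Shares are invariant under rescaling, and `codiff π₁ π₂` is the share vector of the ratio
`π₁ / π₂`; hence the compositional difference of two share vectors is that of the underlying
quantities, which depends only on their componentwise ratios. Parallel log-growth says exactly
that these ratios agree. -/

theorem codiff_eq_share_div {p : ℕ} (π₁ π₂ : Fin p → ℝ) : codiff π₁ π₂ = share (π₁ / π₂) :=
  rfl

theorem share_smul {p : ℕ} {c : ℝ} (hc : c ≠ 0) (q : Fin p → ℝ) : share (c • q) = share q := by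
  funext k
  simp only [share, Pi.smul_apply, smul_eq_mul, ← Finset.mul_sum]
  exact mul_div_mul_left _ _ hc

theorem share_div_share {p : ℕ} (q₁ q₂ : Fin p → ℝ) :
    share q₁ / share q₂ = ((∑ j, q₂ j) / ∑ j, q₁ j) • (q₁ / q₂) := by
  funext k
  simp only [share, Pi.div_apply, Pi.smul_apply, smul_eq_mul]
  rw [div_div_div_eq]
  ring

theorem codiff_share_share {p : ℕ} {q₁ q₂ : Fin p → ℝ} (h₁ : ∑ j, q₁ j ≠ 0)
    (h₂ : ∑ j, q₂ j ≠ 0) : codiff (share q₁) (share q₂) = codiff q₁ q₂ := by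
  rw [codiff_eq_share_div, share_div_share, share_smul (div_ne_zero h₂ h₁)]
  rfl

theorem Real.div_eq_div_of_log_sub_log_eq {a b c d : ℝ} (ha : 0 < a) (hb : 0 < b) (hc : 0 < c)
    (hd : 0 < d) (h : Real.log a - Real.log b = Real.log c - Real.log d) : a / b = c / d := by
  rw [← Real.exp_log (div_pos ha hb), ← Real.exp_log (div_pos hc hd),
    Real.log_div ha.ne' hb.ne', Real.log_div hc.ne' hd.ne', h]

/-- Parallel growths of positive quantity vectors implies equality of
compositional differences of the associated shares. -/
theorem parallel_growths_implies_codiff_eq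
    (p : ℕ)
    (q00 q01 q10 q11 : Fin p → ℝ)
    (h00 : ∀ k, 0 < q00 k) (h01 : ∀ k, 0 < q01 k)
    (h10 : ∀ k, 0 < q10 k) (h11 : ∀ k, 0 < q11 k)
    (hpg : ∀ k, Real.log (q11 k) - Real.log (q10 k)
              = Real.log (q01 k) - Real.log (q00 k)) :
    codiff (share q11) (share q10) = codiff (share q01) (share q00) := by
  rcases isEmpty_or_nonempty (Fin p) with _ | _
  · exact Subsingleton.elim _ _
  have hsum : ∀ q : Fin p → ℝ, (∀ k, 0 < q k) → ∑ k, q k ≠ 0 := fun q hq =>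
    (Finset.sum_pos (fun k _ => hq k) Finset.univ_nonempty).ne'
  have hratio : q11 / q10 = q01 / q00 := funext fun k =>
    Real.div_eq_div_of_log_sub_log_eq (h11 k) (h10 k) (h01 k) (h00 k) (hpg k)
  rw [codiff_share_share (hsum _ h11) (hsum _ h10), codiff_share_share (hsum _ h01) (hsum _ h00),
    codiff_eq_share_div, codiff_eq_share_div, hratio]
end

section
/- Equality of compositional differences is equivalent to parallel trends in log-odds: for π_{g,t} in the open simplex, π_{1,1} ⊖ π_{0,1} = π_{1,0} ⊖ π_{0,0} holds if and only if for every k = 1,...,p-1, log(π_{1,1}(k)/π_{1,1}(p)) - log(π_{0,1}(k)/π_{0,1}(p)) = log(π_{1,0}(k)/π_{1,0}(p)) - log(π_{0,0}(k)/π_{0,0}(p)). -/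
/-!
Both sides compare the componentwise ratios `r = π₁₁ / π₀₁` and `s = π₁₀ / π₀₀`.
Two positive vectors have the same normalization iff they are proportional, i.e. iff
`r k / r p = s k / s p` for every `k`; and the difference of the log-odds of `π₁₁` and `π₀₁`
is exactly `log (r k / r p)`, so the log-odds condition says the same thing after taking logarithms.
-/

open Finset

theorem div_sum_eq_div_sum_iff_div_eq_div {ι : Type*} [Fintype ι] {r s : ι → ℝ}
    (hr : ∀ k, 0 < r k) (hs : ∀ k, 0 < s k) (i : ι) :
    (∀ k, r k / ∑ j, r j = s k / ∑ j, s j) ↔ ∀ k, r k / r i = s k / s i := by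
  have : Nonempty ι := ⟨i⟩
  have hR : (∑ j, r j) ≠ 0 := (sum_pos (fun j _ => hr j) univ_nonempty).ne'
  have hS : (∑ j, s j) ≠ 0 := (sum_pos (fun j _ => hs j) univ_nonempty).ne'
  constructor
  · intro h k
    rw [← div_div_div_cancel_right₀ hR, ← div_div_div_cancel_right₀ hS (s k), h k, h i]
  · intro h
    obtain ⟨c, hc, hrs⟩ : ∃ c ≠ 0, ∀ k, r k = c * s k := by
      refine ⟨r i / s i, (div_pos (hr i) (hs i)).ne', fun k => ?_⟩
      rw [div_mul_eq_mul_div, eq_div_iff (hs i).ne', mul_comm (r i)]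
      exact (div_eq_div_iff (hr i).ne' (hs i).ne').mp (h k)
    intro k
    simp only [hrs, ← mul_sum, mul_div_mul_left _ _ hc]

theorem codiff_eq_codiff_iff {n : ℕ} {π₁ π₂ π₃ π₄ : Fin n → ℝ}
    (h₁ : ∀ k, 0 < π₁ k) (h₂ : ∀ k, 0 < π₂ k) (h₃ : ∀ k, 0 < π₃ k) (h₄ : ∀ k, 0 < π₄ k)
    (i : Fin n) :
    codiff π₁ π₂ = codiff π₃ π₄ ↔
      ∀ k, (π₁ k / π₂ k) / (π₁ i / π₂ i) = (π₃ k / π₄ k) / (π₃ i / π₄ i) :=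
  funext_iff.trans <| div_sum_eq_div_sum_iff_div_eq_div
    (fun k => div_pos (h₁ k) (h₂ k)) (fun k => div_pos (h₃ k) (h₄ k)) i

theorem Real.log_div_sub_log_div_eq_log_div_div {a b c d : ℝ}
    (ha : 0 < a) (hb : 0 < b) (hc : 0 < c) (hd : 0 < d) :
    Real.log (a / b) - Real.log (c / d) = Real.log ((a / c) / (b / d)) := by
  rw [← Real.log_div (div_pos ha hb).ne' (div_pos hc hd).ne', div_div_div_comm]

/-- Equality of compositional differences is equivalent to parallel
trends in log-odds (with the last category as baseline). -/
theorem codiff_eq_iff_parallel_logodds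
    (p : ℕ)
    (π00 π01 π10 π11 : Fin (p + 1) → ℝ)
    (h00 : (∀ k, 0 < π00 k) ∧ ∑ k, π00 k = 1)
    (h01 : (∀ k, 0 < π01 k) ∧ ∑ k, π01 k = 1)
    (h10 : (∀ k, 0 < π10 k) ∧ ∑ k, π10 k = 1)
    (h11 : (∀ k, 0 < π11 k) ∧ ∑ k, π11 k = 1) :
    codiff π11 π01 = codiff π10 π00 ↔
      ∀ k : Fin p,
        Real.log (π11 k.castSucc / π11 (Fin.last p))
          - Real.log (π01 k.castSucc / π01 (Fin.last p))
        = Real.log (π10 k.castSucc / π10 (Fin.last p))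
          - Real.log (π00 k.castSucc / π00 (Fin.last p)) := by
  obtain ⟨h00, -⟩ := h00
  obtain ⟨h01, -⟩ := h01
  obtain ⟨h10, -⟩ := h10
  obtain ⟨h11, -⟩ := h11
  have hr : ∀ k, 0 < π11 k / π01 k := fun k => div_pos (h11 k) (h01 k)
  have hs : ∀ k, 0 < π10 k / π00 k := fun k => div_pos (h10 k) (h00 k)
  rw [codiff_eq_codiff_iff h11 h01 h10 h00 (Fin.last p), Fin.forall_fin_succ',
    div_self (hr _).ne', div_self (hs _).ne', eq_self_iff_true, and_true]
  refine forall_congr' fun k => ?_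
  rw [Real.log_div_sub_log_div_eq_log_div_div (h11 _) (h11 _) (h01 _) (h01 _),
    Real.log_div_sub_log_div_eq_log_div_div (h10 _) (h10 _) (h00 _) (h00 _)]
  exact (Real.log_injOn_pos.eq_iff (div_pos (hr _) (hr _)) (div_pos (hs _) (hs _))).symm
end

section
/- Under parallel growths, the counterfactual share vector satisfies π_{1,1} = ℓ^{-1}(ℓ(π_{1,0}) + ℓ(π_{0,1}) - ℓ(π_{0,0})), where ℓ is the log-odds transform with baseline category p and ℓ^{-1} the softmax inverse. -/
/-- Log-odds transform with baseline the last category. -/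
noncomputable def logOdds {p : ℕ} (π : Fin (p + 1) → ℝ) : Fin p → ℝ :=
  fun k => Real.log (π k.castSucc / π (Fin.last p))

/-- Softmax map `y ↦ (e^{y₁},…,e^{y_p},1)/(1+∑ e^{y_i})`. -/
noncomputable def softmax {p : ℕ} (y : Fin p → ℝ) : Fin (p + 1) → ℝ :=
  fun i => (Fin.lastCases 1 (fun k => Real.exp (y k)) i) / (1 + ∑ j, Real.exp (y j))

/-!
Log-odds only see ratios of quantities, so `ℓ(π_{g,t}) = ℓ(q_{g,t})`, and `ℓ(q)` is a linear
function of `log q`. Parallel growth is an additive identity between the vectors `log q_{g,t}`,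
hence `ℓ(q₁₁) = ℓ(q₁₀) + ℓ(q₀₁) - ℓ(q₀₀)`. Finally softmax inverts `ℓ` on positive vectors up to
normalization: `softmax (ℓ q) = share q`.
-/

theorem share_eq_inv_sum_smul {p : ℕ} (q : Fin p → ℝ) : share q = (∑ j, q j)⁻¹ • q := by
  funext k
  simp only [share, Pi.smul_apply, smul_eq_mul]
  ring

theorem logOdds_smul {p : ℕ} (π : Fin (p + 1) → ℝ) {c : ℝ} (hc : c ≠ 0) :
    logOdds (c • π) = logOdds π := by
  funext k
  simp only [logOdds, Pi.smul_apply, smul_eq_mul, mul_div_mul_left _ _ hc]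

theorem logOdds_share {p : ℕ} (q : Fin (p + 1) → ℝ) (hq : ∑ j, q j ≠ 0) :
    logOdds (share q) = logOdds q := by
  rw [share_eq_inv_sum_smul, logOdds_smul q (inv_ne_zero hq)]

theorem logOdds_apply {p : ℕ} {π : Fin (p + 1) → ℝ} (hπ : ∀ k, π k ≠ 0) (k : Fin p) :
    logOdds π k = Real.log (π k.castSucc) - Real.log (π (Fin.last p)) :=
  Real.log_div (hπ _) (hπ _)

theorem logOdds_eq_add_sub_of_log_sub_eq {p : ℕ} {q00 q01 q10 q11 : Fin (p + 1) → ℝ}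
    (h00 : ∀ k, q00 k ≠ 0) (h01 : ∀ k, q01 k ≠ 0) (h10 : ∀ k, q10 k ≠ 0) (h11 : ∀ k, q11 k ≠ 0)
    (hpg : ∀ k, Real.log (q11 k) - Real.log (q10 k) = Real.log (q01 k) - Real.log (q00 k)) :
    logOdds q11 = logOdds q10 + logOdds q01 - logOdds q00 := by
  funext k
  simp only [Pi.add_apply, Pi.sub_apply, logOdds_apply h00, logOdds_apply h01,
    logOdds_apply h10, logOdds_apply h11]
  linarith [hpg k.castSucc, hpg (Fin.last p)]

theorem exp_logOdds {p : ℕ} {π : Fin (p + 1) → ℝ} (hπ : ∀ k, 0 < π k) (k : Fin p) :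
    Real.exp (logOdds π k) = π k.castSucc / π (Fin.last p) :=
  Real.exp_log (div_pos (hπ _) (hπ _))

theorem softmax_logOdds {p : ℕ} {π : Fin (p + 1) → ℝ} (hπ : ∀ k, 0 < π k) :
    softmax (logOdds π) = share π := by
  have hlast : π (Fin.last p) ≠ 0 := (hπ _).ne'
  have hsum : 1 + ∑ j : Fin p, π j.castSucc / π (Fin.last p) = (∑ j, π j) / π (Fin.last p) := by
    rw [← Finset.sum_div, Fin.sum_univ_castSucc, add_div, div_self hlast, add_comm]
  have hnum : ∀ i, Fin.lastCases (motive := fun _ => ℝ) 1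
      (fun k => π k.castSucc / π (Fin.last p)) i = π i / π (Fin.last p) := by
    intro i
    induction i using Fin.lastCases with
    | last => rw [Fin.lastCases_last, div_self hlast]
    | cast k => rw [Fin.lastCases_castSucc]
  funext i
  simp only [softmax, share, exp_logOdds hπ, hsum, hnum]
  exact div_div_div_cancel_right₀ hlast _ _

/-- Under parallel growths, the counterfactual share vector satisfies
`π₁₁ = ℓ⁻¹(ℓ(π₁₀) + ℓ(π₀₁) - ℓ(π₀₀))`. -/
theorem counterfactual_shares_via_logodds
    (p : ℕ)
    (q00 q01 q10 q11 : Fin (p + 1) → ℝ)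
    (h00 : ∀ k, 0 < q00 k) (h01 : ∀ k, 0 < q01 k)
    (h10 : ∀ k, 0 < q10 k) (h11 : ∀ k, 0 < q11 k)
    (hpg : ∀ k, Real.log (q11 k) - Real.log (q10 k)
              = Real.log (q01 k) - Real.log (q00 k)) :
    share q11 = softmax (logOdds (share q10) + logOdds (share q01)
      - logOdds (share q00)) := by
  have hsum : ∀ q : Fin (p + 1) → ℝ, (∀ k, 0 < q k) → ∑ j, q j ≠ 0 := fun q hq =>
    (Finset.sum_pos (fun j _ => hq j) Finset.univ_nonempty).ne'
  rw [logOdds_share q10 (hsum q10 h10), logOdds_share q01 (hsum q01 h01),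
    logOdds_share q00 (hsum q00 h00),
    ← logOdds_eq_add_sub_of_log_sub_eq (fun k => (h00 k).ne') (fun k => (h01 k).ne')
      (fun k => (h10 k).ne') (fun k => (h11 k).ne') hpg,
    softmax_logOdds h11]
end
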